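/- arXiv:2506.03815 — 3 statements merged into one kernel-verified Lean document; each statement's English description precedes it below -/
import Mathlib

section
/- Let p ≥ 1 and m ≥ 2 be integers and let D_SG(m) = {i/(m−1) : i = 0, 1, …, m−1}^p be the static grid design with m^p points. Then there exists a monotone function f ∈ Ω (namely f(x) = −1 if x_k < 1 for every k and f(x) = 1 otherwise) such that V(U(D_SG(m), f)) = 1 − (m−2)^p/(m−1)^p; in particular sup_{f ∈ Ω} V(U(D_SG(m), f)) = 1 − (m−2)^p/(m−1)^p. -/
open MeasureTheory Set

attribute [local instance] Classical.propDecidable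

/-- The uncertain region `U(D, f)` on the cube `[0,1]^p`. -/
def uncertainRegion (p : ℕ) (D : Set (Fin p → ℝ)) (f : (Fin p → ℝ) → ℝ) :
    Set (Fin p → ℝ) :=
  Icc 0 1 \ ((⋃ x ∈ {y ∈ D | f y = -1}, Icc (0 : Fin p → ℝ) x) ∪
             (⋃ x ∈ {y ∈ D | f y = 1}, Icc x (1 : Fin p → ℝ)))

/-- `Ω`: monotone `{-1,1}`-valued functions on the cube `[0,1]^p`. -/
def OmegaSet (p : ℕ) : Set ((Fin p → ℝ) → ℝ) :=
  {f | MonotoneOn f (Icc 0 1) ∧ ∀ x ∈ Icc (0 : Fin p → ℝ) 1, f x = -1 ∨ f x = 1}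

/-- The static grid design `D_SG(m) = {i/(m-1) : i = 0, …, m-1}^p`. -/
def staticGrid (p m : ℕ) : Set (Fin p → ℝ) :=
  {x | ∀ k, ∃ i : ℕ, i < m ∧ x k = (i : ℝ) / ((m : ℝ) - 1)}

/-!
Put `m = n + 2`, so that the grid cuts the cube into `(n + 1)^p` cells of side `1/(n + 1)`.
A point of `U(D, f)` lies in a cell whose lower corner has `f = -1` and whose upper corner has
`f = 1`. By monotonicity, each diagonal line `j, j + 𝟙, j + 2𝟙, …` of cells contains at most one
such cell, and there are `(n + 1)^p - n^p` diagonal lines (one through each cell with a zero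
coordinate), so `V(U) ≤ 1 - n^p/(n + 1)^p`. For the extremal `f`, the boxes below the grid
points labelled `-1` fill exactly `[0, n/(n + 1)]^p`, while the boxes above those labelled `1` lie
in the null set of the faces `x_k = 1`; so `U` is the complement of that cube up to a null set.
-/

theorem volume_Icc_of_sub_eq {ι : Type*} [Fintype ι] {a b : ι → ℝ} {s : ℝ}
    (h : ∀ k, b k - a k = s) :
    volume (Icc a b) = ENNReal.ofReal s ^ Fintype.card ι := by
  simp [Real.volume_Icc_pi, h]

section Diagonal

open Finset

variable {ι : Type*} [Fintype ι]

def DiagonalFree {n : ℕ} (S : Finset (ι → Fin n)) : Prop :=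
  ∀ j ∈ S, ∀ j' ∈ S, ∀ d : ℕ, (∀ k, (j' k : ℕ) = j k + d) → d = 0

theorem card_filter_exists_eq_zero_add_pow [DecidableEq ι] (n : ℕ) :
    #{j : ι → Fin (n + 1) | ∃ k, j k = 0} + n ^ Fintype.card ι = (n + 1) ^ Fintype.card ι := by
  have hnonzero : ({j : ι → Fin (n + 1) | ¬∃ k, j k = 0} : Finset _) =
      Fintype.piFinset fun _ => {0}ᶜ := by
    ext j
    simp
  have hsplit :=
    card_filter_add_card_filter_not (s := univ) fun j : ι → Fin (n + 1) => ∃ k, j k = 0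
  rw [hnonzero] at hsplit
  simpa [card_compl] using hsplit

theorem DiagonalFree.card_add_pow_le [Nonempty ι] {n : ℕ} {S : Finset (ι → Fin (n + 1))}
    (hS : DiagonalFree S) : #S + n ^ Fintype.card ι ≤ (n + 1) ^ Fintype.card ι := by
  let base : (ι → Fin (n + 1)) → ℕ := fun j => univ.inf' univ_nonempty fun k => (j k : ℕ)
  have base_le (j k) : base j ≤ j k := inf'_le _ (mem_univ k)
  -- slides a cell down its diagonal line onto the face where some coordinate vanishes
  let proj : (ι → Fin (n + 1)) → ι → Fin (n + 1) :=
    fun j k => ⟨j k - base j, (Nat.sub_le _ _).trans_lt (j k).isLt⟩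
  have hmaps : Set.MapsTo proj S ({j | ∃ k, j k = 0} : Finset (ι → Fin (n + 1))) := by
    intro j _
    obtain ⟨k, -, hk⟩ := exists_mem_eq_inf' univ_nonempty fun k => (j k : ℕ)
    simp only [coe_filter]
    exact ⟨mem_univ _, k, Fin.ext (by simp [proj, base, hk])⟩
  have hinj_of_le : ∀ j ∈ S, ∀ j' ∈ S, proj j = proj j' → base j ≤ base j' → j = j' := by
    intro j hj j' hj' h hle
    have hk (k) : (j k : ℕ) - base j = j' k - base j' := congrArg Fin.val (congrFun h k)
    have hd := hS j hj j' hj' (base j' - base j)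
      fun k => by have := base_le j k; have := base_le j' k; have := hk k; omega
    funext k; ext; have := base_le j k; have := base_le j' k; have := hk k; omega
  have hinj : Set.InjOn proj S := by
    intro j hj j' hj' h
    rcases le_total (base j) (base j') with hle | hle
    · exact hinj_of_le j hj j' hj' h hle
    · exact (hinj_of_le j' hj' j hj h.symm hle).symm
  calc #S + n ^ Fintype.card ι
      ≤ #{j : ι → Fin (n + 1) | ∃ k, j k = 0} + n ^ Fintype.card ι := by
        grw [card_le_card_of_injOn proj hmaps hinj]
    _ = (n + 1) ^ Fintype.card ι := card_filter_exists_eq_zero_add_pow n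

end Diagonal

section Grid

variable {ι : Type*}

noncomputable def gridPoint (n : ℕ) (i : ι → ℕ) : ι → ℝ := fun k => (i k : ℝ) / (n + 1)

theorem gridPoint_mono (n : ℕ) : Monotone (gridPoint (ι := ι) n) := fun i i' h k => by
  simp only [gridPoint]; gcongr; exact h k

theorem gridPoint_mem_staticGrid {p n : ℕ} {i : Fin p → ℕ} (hi : ∀ k, i k ≤ n + 1) :
    gridPoint n i ∈ staticGrid p (n + 2) := fun k =>
  ⟨i k, by have := hi k; omega, by simp only [gridPoint]; push_cast; ring_nf⟩

theorem gridPoint_mem_Icc {n : ℕ} {i : ι → ℕ} (hi : ∀ k, i k ≤ n + 1) :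
    gridPoint n i ∈ Icc 0 1 :=
  ⟨fun k => by simp only [gridPoint]; positivity, fun k => by
    simp only [gridPoint, Pi.one_apply]
    rw [div_le_one (by positivity)]
    exact_mod_cast hi k⟩

theorem exists_fin_mem_Icc_div {n : ℕ} {t : ℝ} (ht : t ∈ Icc 0 1) :
    ∃ i : Fin (n + 1), t ∈ Icc ((i : ℕ) / (n + 1 : ℝ)) (((i : ℕ) + 1) / (n + 1 : ℝ)) := by
  have hpos : (0 : ℝ) < n + 1 := by positivity
  have hscaled : 0 ≤ (n + 1) * t := by nlinarith [ht.1]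
  refine ⟨⟨min ⌊(n + 1) * t⌋₊ n, by omega⟩, ?_, ?_⟩
  · rw [div_le_iff₀ hpos, Fin.val_mk]
    calc ((min ⌊(n + 1) * t⌋₊ n : ℕ) : ℝ) ≤ ⌊(n + 1) * t⌋₊ := by exact_mod_cast min_le_left _ _
      _ ≤ (n + 1) * t := Nat.floor_le hscaled
      _ = t * (n + 1) := mul_comm _ _
  · rw [le_div_iff₀ hpos, Fin.val_mk]
    rcases le_total ⌊(n + 1) * t⌋₊ n with h | h
    · rw [min_eq_left h]; linarith [Nat.lt_floor_add_one ((n + 1) * t)]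
    · rw [min_eq_right h]; nlinarith [ht.2]

theorem exists_mem_Icc_gridPoint [Fintype ι] {n : ℕ} {x : ι → ℝ} (hx : x ∈ Icc 0 1) :
    ∃ j : ι → Fin (n + 1), x ∈ Icc (gridPoint n fun k => j k) (gridPoint n fun k => j k + 1) := by
  choose j hj using fun k => exists_fin_mem_Icc_div (n := n) ⟨hx.1 k, hx.2 k⟩
  refine ⟨j, fun k => (hj k).1, fun k => ?_⟩
  simpa [gridPoint] using (hj k).2

theorem volume_Icc_gridPoint [Fintype ι] (n : ℕ) (j : ι → ℕ) :
    volume (Icc (gridPoint n j) (gridPoint n fun k => j k + 1)) =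
      ENNReal.ofReal (1 / (n + 1)) ^ Fintype.card ι :=
  volume_Icc_of_sub_eq fun k => by simp only [gridPoint]; push_cast; ring

end Grid

theorem exists_eq_div_of_mem_staticGrid {p n : ℕ} {x : Fin p → ℝ}
    (hx : x ∈ staticGrid p (n + 2)) (k : Fin p) : ∃ i : ℕ, i ≤ n + 1 ∧ x k = i / (n + 1) := by
  obtain ⟨i, hi, hxi⟩ := hx k
  exact ⟨i, by omega, by rw [hxi]; push_cast; ring⟩

theorem staticGrid_subset_Icc (p n : ℕ) : staticGrid p (n + 2) ⊆ Icc 0 1 := by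
  intro x hx
  choose i hi hxi using exists_eq_div_of_mem_staticGrid hx
  exact (funext hxi : x = gridPoint n i) ▸ gridPoint_mem_Icc hi

section UpperBound

open Finset

variable {ι : Type*} [Fintype ι]

noncomputable def mixedCells (f : (ι → ℝ) → ℝ) (n : ℕ) : Finset (ι → Fin (n + 1)) :=
  {j | f (gridPoint n fun k => j k) = -1 ∧ f (gridPoint n fun k => j k + 1) = 1}

theorem diagonalFree_mixedCells {n : ℕ} {f : (ι → ℝ) → ℝ} (hf : MonotoneOn f (Icc 0 1)) :
    DiagonalFree (mixedCells f n) := by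
  intro j hj j' hj' d hd
  by_contra hd0
  simp only [mixedCells, mem_filter_univ] at hj hj'
  have hle : (gridPoint n fun k => (j k : ℕ) + 1) ≤ gridPoint n fun k => j' k :=
    gridPoint_mono n fun k => by simp only [hd k]; omega
  have := hf (gridPoint_mem_Icc fun k => by omega) (gridPoint_mem_Icc fun k => by omega) hle
  rw [hj.2, hj'.1] at this
  norm_num at this

end UpperBound

section UncertainRegion

open Finset

variable {p n : ℕ} {f : (Fin p → ℝ) → ℝ}

theorem uncertainRegion_subset_mixedCells (hf : f ∈ OmegaSet p) :
    uncertainRegion p (staticGrid p (n + 2)) f ⊆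
      ⋃ j ∈ mixedCells f n, Icc (gridPoint n fun k => j k) (gridPoint n fun k => j k + 1) := by
  rintro x ⟨hx, hxU⟩
  obtain ⟨j, hlo, hhi⟩ := exists_mem_Icc_gridPoint (n := n) hx
  have hlo_grid : (gridPoint n fun k => j k) ∈ staticGrid p (n + 2) :=
    gridPoint_mem_staticGrid fun k => by omega
  have hhi_grid : (gridPoint n fun k => j k + 1) ∈ staticGrid p (n + 2) :=
    gridPoint_mem_staticGrid fun k => by omega
  have hflo : f (gridPoint n fun k => j k) = -1 :=
    (hf.2 _ (staticGrid_subset_Icc p n hlo_grid)).resolve_right fun h =>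
      hxU (Or.inr (mem_iUnion₂.2 ⟨_, ⟨hlo_grid, h⟩, hlo, hx.2⟩))
  have hfhi : f (gridPoint n fun k => j k + 1) = 1 :=
    (hf.2 _ (staticGrid_subset_Icc p n hhi_grid)).resolve_left fun h =>
      hxU (Or.inl (mem_iUnion₂.2 ⟨_, ⟨hhi_grid, h⟩, hx.1, hhi⟩))
  exact mem_iUnion₂.2 ⟨j, by simp [mixedCells, hflo, hfhi], hlo, hhi⟩

theorem volume_uncertainRegion_le [Nonempty (Fin p)] (hf : f ∈ OmegaSet p) :
    volume (uncertainRegion p (staticGrid p (n + 2)) f) ≤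
      ENNReal.ofReal (1 - (n : ℝ) ^ p / ((n : ℝ) + 1) ^ p) := by
  have hcard := (diagonalFree_mixedCells (n := n) hf.1).card_add_pow_le
  rw [Fintype.card_fin] at hcard
  have hpos : (0 : ℝ) < ((n : ℝ) + 1) ^ p := by positivity
  calc volume (uncertainRegion p (staticGrid p (n + 2)) f)
      ≤ ∑ j ∈ mixedCells f n,
          volume (Icc (gridPoint n fun k => j k) (gridPoint n fun k => j k + 1)) :=
        (measure_mono (uncertainRegion_subset_mixedCells hf)).trans (measure_biUnion_finset_le _ _)
    _ = #(mixedCells f n) * ENNReal.ofReal (1 / (n + 1)) ^ p := by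
        simp [volume_Icc_gridPoint]
    _ = ENNReal.ofReal (#(mixedCells f n) / ((n : ℝ) + 1) ^ p) := by
        rw [← ENNReal.ofReal_pow (by positivity), ← ENNReal.ofReal_natCast,
          ← ENNReal.ofReal_mul (by positivity), one_div, inv_pow, div_eq_mul_inv]
    _ ≤ ENNReal.ofReal (1 - (n : ℝ) ^ p / ((n : ℝ) + 1) ^ p) := by
        refine ENNReal.ofReal_le_ofReal ?_
        rw [le_sub_iff_add_le, ← add_div, div_le_one hpos]
        exact_mod_cast hcard

end UncertainRegion

noncomputable def topFaceSign (p : ℕ) (x : Fin p → ℝ) : ℝ := if ∀ k, x k < 1 then -1 else 1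

theorem topFaceSign_mem_OmegaSet (p : ℕ) : topFaceSign p ∈ OmegaSet p := by
  refine ⟨fun x _ y _ hxy => ?_, fun x _ => ?_⟩
  · by_cases hy : ∀ k, y k < 1
    · simp [topFaceSign, hy, fun k => (hxy k).trans_lt (hy k)]
    · simp only [topFaceSign, if_neg hy]
      split_ifs <;> norm_num
  · unfold topFaceSign
    split_ifs <;> simp

theorem biUnion_topFaceSign_eq_one_subset (p : ℕ) (D : Set (Fin p → ℝ)) :
    ⋃ x ∈ {y ∈ D | topFaceSign p y = 1}, Icc x (1 : Fin p → ℝ) ⊆ ⋃ k, {y | y k = 1} := by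
  refine iUnion₂_subset fun x ⟨_, hfx⟩ y hy => ?_
  obtain ⟨k, hk⟩ : ∃ k, 1 ≤ x k := by
    by_contra! h
    norm_num [topFaceSign, h] at hfx
  exact mem_iUnion.2 ⟨k, le_antisymm (hy.2 k) (hk.trans (hy.1 k))⟩

theorem biUnion_topFaceSign_eq_neg_one (p n : ℕ) :
    ⋃ x ∈ {y ∈ staticGrid p (n + 2) | topFaceSign p y = -1}, Icc (0 : Fin p → ℝ) x =
      Icc 0 (gridPoint n fun _ => n) := by
  have hcorner : ∀ k, (gridPoint n fun _ => n : Fin p → ℝ) k < 1 := fun k => by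
    simp only [gridPoint]
    rw [div_lt_one (by positivity)]
    linarith
  apply Subset.antisymm
  · refine iUnion₂_subset fun x ⟨hx, hfx⟩ => Icc_subset_Icc_right fun k => ?_
    have hlt : ∀ k, x k < 1 := by
      by_contra h
      norm_num [topFaceSign, h] at hfx
    obtain ⟨i, -, hxi⟩ := exists_eq_div_of_mem_staticGrid hx k
    have hi : i < n + 1 := by
      have := hlt k
      rw [hxi, div_lt_one (by positivity)] at this
      exact_mod_cast this
    rw [hxi]
    simp only [gridPoint]
    gcongr
    exact_mod_cast (by omega : i ≤ n)
  · exact subset_biUnion_of_mem (u := fun x => Icc 0 x)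
      ⟨gridPoint_mem_staticGrid fun _ => by omega, by simp [topFaceSign, hcorner]⟩

theorem volume_uncertainRegion_topFaceSign (p n : ℕ) :
    volume (uncertainRegion p (staticGrid p (n + 2)) (topFaceSign p)) =
      ENNReal.ofReal (1 - (n : ℝ) ^ p / ((n : ℝ) + 1) ^ p) := by
  have hnull : volume (⋃ k : Fin p, {y : Fin p → ℝ | y k = 1}) = 0 :=
    measure_iUnion_null fun k => by rw [volume_pi]; exact Measure.pi_hyperplane _ k 1
  have hcube : Icc (0 : Fin p → ℝ) (gridPoint n fun _ => n) ⊆ Icc 0 1 :=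
    Icc_subset_Icc_right (gridPoint_mem_Icc fun _ => by omega).2
  rw [uncertainRegion, ← sdiff_sdiff, biUnion_topFaceSign_eq_neg_one,
    measure_sdiff_null (measure_mono_null (biUnion_topFaceSign_eq_one_subset _ _) hnull),
    measure_sdiff hcube measurableSet_Icc.nullMeasurableSet measure_Icc_lt_top.ne,
    volume_Icc_of_sub_eq (s := 1) (by simp),
    volume_Icc_of_sub_eq (s := n / (n + 1)) (by simp [gridPoint]),
    Fintype.card_fin, ← ENNReal.ofReal_pow zero_le_one, ← ENNReal.ofReal_pow (by positivity),
    ← ENNReal.ofReal_sub _ (by positivity), one_pow, div_pow]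

/-- Theorem 1 (attainment part): the monotone function which is `-1` iff all coordinates
are `< 1` attains uncertain volume `1 - (m-2)^p/(m-1)^p` on the static grid design, and
consequently the supremum over `Ω` equals this value. -/
theorem staticGrid_uncertain_volume_sup (p m : ℕ) (hp : 1 ≤ p) (hm : 2 ≤ m) :
    (∃ f ∈ OmegaSet p,
      (∀ x, f x = if (∀ k, x k < 1) then (-1 : ℝ) else 1) ∧
      volume (uncertainRegion p (staticGrid p m) f)
        = ENNReal.ofReal (1 - ((m : ℝ) - 2) ^ p / ((m : ℝ) - 1) ^ p)) ∧
    (⨆ f ∈ OmegaSet p, volume (uncertainRegion p (staticGrid p m) f))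
      = ENNReal.ofReal (1 - ((m : ℝ) - 2) ^ p / ((m : ℝ) - 1) ^ p) := by
  obtain ⟨n, rfl⟩ : ∃ n, m = n + 2 := ⟨m - 2, by omega⟩
  have : Nonempty (Fin p) := ⟨⟨0, hp⟩⟩
  have hcast : ((n + 2 : ℕ) : ℝ) - 2 = n ∧ ((n + 2 : ℕ) : ℝ) - 1 = n + 1 := by
    push_cast; constructor <;> ring
  rw [hcast.1, hcast.2]
  have hattain := volume_uncertainRegion_topFaceSign p n
  refine ⟨⟨topFaceSign p, topFaceSign_mem_OmegaSet p, fun _ => rfl, hattain⟩, ?_⟩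
  refine le_antisymm (iSup₂_le fun f hf => volume_uncertainRegion_le hf) ?_
  exact hattain ▸ le_iSup₂ (f := fun g (_ : g ∈ OmegaSet p) =>
    volume (uncertainRegion p (staticGrid p (n + 2)) g)) _ (topFaceSign_mem_OmegaSet p)
end

section
/- Let p = 1 and n ≥ 0, let X_1, …, X_n be independent random points uniformly distributed on [0,1], and let f ∈ Ω be monotone with z := sup{x ∈ [0,1] : f(x) = −1} ∈ (0,1). Then E[ V(U({X_1,…,X_n}, f)) ] = (2 − (1−z)^{n+1} − z^{n+1})/(n + 1). -/
open MeasureTheory Set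

/-- The uncertain region `U(D, f)` for a design `D ⊆ [0,1]` (case `p = 1`). -/
def uncertainRegion1 (D : Set ℝ) (f : ℝ → ℝ) : Set ℝ :=
  Icc 0 1 \ ((⋃ x ∈ {y ∈ D | f y = -1}, Icc (0 : ℝ) x) ∪
             (⋃ x ∈ {y ∈ D | f y = 1}, Icc x (1 : ℝ)))

/-- `Ω`: monotone `{-1,1}`-valued functions on `[0,1]`. -/
def Omega1 : Set (ℝ → ℝ) :=
  {f | MonotoneOn f (Icc 0 1) ∧ ∀ x ∈ Icc (0 : ℝ) 1, f x = -1 ∨ f x = 1}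

/-- The uniform distribution on `[0,1]`. -/
noncomputable def unif : Measure ℝ := volume.restrict (Icc 0 1)

/-! For the threshold function with jump at `z`, a point `t ∈ [0,1]` stays uncertain iff no
design point falls in `Ico t z ∪ Icc z t`, a set of length `|t - z|`; so it is uncertain with
probability `(1 - |t - z|)^n`. Tonelli turns the expected volume into `∫₀¹ (1 - |t - z|)^n dt`,
computed by splitting at `z`. A monotone `f ∈ Ω` agrees with the threshold function on `[0,1]`
off `z`, and almost surely no design point is `z`. -/

instance : IsProbabilityMeasure unif := ⟨by simp [unif]⟩

noncomputable def threshold (z x : ℝ) : ℝ := if x < z then -1 else 1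

theorem uncertainRegion1_congr {D : Set ℝ} {f g : ℝ → ℝ} (h : EqOn f g D) :
    uncertainRegion1 D f = uncertainRegion1 D g := by
  have hsep : ∀ c : ℝ, {y ∈ D | f y = c} = {y ∈ D | g y = c} := fun c =>
    sep_ext_iff.2 fun y hy => by rw [h hy]
  simp only [uncertainRegion1, hsep]

theorem mem_uncertainRegion1_threshold {D : Set ℝ} {z t : ℝ} :
    t ∈ uncertainRegion1 D (threshold z) ↔
      t ∈ Icc 0 1 ∧ ∀ x ∈ D, x ∉ Ico t z ∪ Icc z t := by
  simp only [uncertainRegion1, threshold, mem_sdiff, mem_union, mem_iUnion, mem_sep_iff, mem_Icc,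
    mem_Ico, exists_prop]
  refine and_congr_right fun ⟨ht0, ht1⟩ => ?_
  simp only [not_or, not_exists, not_and]
  grind

theorem volume_Ico_union_Icc (t z : ℝ) :
    volume (Ico t z ∪ Icc z t) = ENNReal.ofReal |t - z| := by
  have hsub : Ico t z ∪ Icc z t ⊆ uIcc t z :=
    union_subset (Ico_subset_Icc_self.trans Icc_subset_uIcc) Icc_subset_uIcc'
  have hsup : uIcc t z ⊆ Ico t z ∪ Icc z t ∪ {z} := by
    intro x hx
    rw [mem_uIcc] at hx
    grind
  refine le_antisymm ?_ ?_
  · rw [abs_sub_comm, ← Real.volume_interval]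
    exact measure_mono hsub
  · calc ENNReal.ofReal |t - z| = volume (uIcc t z) := by rw [Real.volume_interval, abs_sub_comm]
      _ ≤ volume (Ico t z ∪ Icc z t) + volume ({z} : Set ℝ) :=
        (measure_mono hsup).trans (measure_union_le _ _)
      _ = volume (Ico t z ∪ Icc z t) := by rw [Real.volume_singleton, add_zero]

theorem unif_compl_Ico_union_Icc {t z : ℝ} (ht : t ∈ Icc 0 1) (hz : z ∈ Icc 0 1) :
    unif (Ico t z ∪ Icc z t)ᶜ = ENNReal.ofReal (1 - |t - z|) := by
  have hsub : Ico t z ∪ Icc z t ⊆ Icc 0 1 :=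
    union_subset (Ico_subset_Icc_self.trans (Icc_subset_Icc ht.1 hz.2))
      (Icc_subset_Icc hz.1 ht.2)
  have hmeas : MeasurableSet (Ico t z ∪ Icc z t) := measurableSet_Ico.union measurableSet_Icc
  rw [prob_compl_eq_one_sub hmeas, unif, Measure.restrict_eq_self _ hsub,
    volume_Ico_union_Icc, ENNReal.ofReal_sub _ (abs_nonneg _), ENNReal.ofReal_one]

theorem integral_one_sub_abs_sub_pow (n : ℕ) {z : ℝ} (hz : z ∈ Icc (0 : ℝ) 1) :
    ∫ t in (0 : ℝ)..1, (1 - |t - z|) ^ n = (2 - (1 - z) ^ (n + 1) - z ^ (n + 1)) / (n + 1) := by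
  have hcont : Continuous fun t : ℝ => (1 - |t - z|) ^ n := by fun_prop
  have hleft : ∫ t in (0 : ℝ)..z, (1 - |t - z|) ^ n = (1 - (1 - z) ^ (n + 1)) / (n + 1) := by
    rw [intervalIntegral.integral_congr (g := fun t => (t + (1 - z)) ^ n) fun t ht => by
      rw [uIcc_of_le hz.1] at ht
      simp only [abs_of_nonpos (sub_nonpos.2 ht.2)]; ring_nf]
    rw [intervalIntegral.integral_comp_add_right (· ^ n), integral_pow]
    ring_nf
  have hright : ∫ t in z..1, (1 - |t - z|) ^ n = (1 - z ^ (n + 1)) / (n + 1) := by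
    rw [intervalIntegral.integral_congr (g := fun t => (1 + z - t) ^ n) fun t ht => by
      rw [uIcc_of_le hz.2] at ht
      simp only [abs_of_nonneg (sub_nonneg.2 ht.1)]; ring_nf]
    rw [intervalIntegral.integral_comp_sub_left (· ^ n), integral_pow]
    ring_nf
  rw [← intervalIntegral.integral_add_adjacent_intervals (hcont.intervalIntegrable 0 z)
    (hcont.intervalIntegrable z 1), hleft, hright]
  ring

theorem lintegral_ofReal_one_sub_abs_sub_pow (n : ℕ) {z : ℝ} (hz : z ∈ Icc (0 : ℝ) 1) :
    ∫⁻ t in Icc 0 1, ENNReal.ofReal ((1 - |t - z|) ^ n)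
      = ENNReal.ofReal ((2 - (1 - z) ^ (n + 1) - z ^ (n + 1)) / (n + 1)) := by
  have hnonneg : 0 ≤ᵐ[volume.restrict (Icc 0 1)] fun t : ℝ => (1 - |t - z|) ^ n := by
    filter_upwards [ae_restrict_mem measurableSet_Icc] with t ht
    exact pow_nonneg (sub_nonneg.2 (abs_sub_le_of_nonneg_of_le ht.1 ht.2 hz.1 hz.2)) n
  rw [← ofReal_integral_eq_lintegral_ofReal (by fun_prop : Continuous _).integrableOn_Icc hnonneg,
    integral_Icc_eq_integral_Ioc, ← intervalIntegral.integral_of_le zero_le_one,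
    integral_one_sub_abs_sub_pow n hz]

theorem lintegral_volume_uncertainRegion1_threshold {ι : Type*} [Fintype ι] {z : ℝ}
    (hz : z ∈ Icc (0 : ℝ) 1) :
    ∫⁻ ω : ι → ℝ, volume (uncertainRegion1 (range ω) (threshold z)) ∂(Measure.pi fun _ => unif)
      = ∫⁻ t in Icc 0 1, ENNReal.ofReal ((1 - |t - z|) ^ Fintype.card ι) := by
  set W := {p : (ι → ℝ) × ℝ | p.2 ∈ uncertainRegion1 (range p.1) (threshold z)}
  have hW : MeasurableSet W := by
    simp only [W, mem_uncertainRegion1_threshold, forall_mem_range]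
    measurability
  have hslice : ∀ t, (Measure.pi fun _ => unif) ((fun ω => (ω, t)) ⁻¹' W)
      = (Icc 0 1).indicator (fun t => ENNReal.ofReal ((1 - |t - z|) ^ Fintype.card ι)) t := by
    intro t
    by_cases ht : t ∈ Icc 0 1
    · have : (fun ω => (ω, t)) ⁻¹' W = univ.pi fun _ => (Ico t z ∪ Icc z t)ᶜ := by
        ext ω
        simp only [W, mem_preimage, mem_ofPred_eq, mem_uncertainRegion1_threshold,
          forall_mem_range, ht, true_and, mem_univ_pi, mem_compl_iff]
      rw [this, Measure.pi_pi, indicator_of_mem ht, Finset.prod_const, Finset.card_univ,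
        unif_compl_Ico_union_Icc ht hz, ENNReal.ofReal_pow]
      exact sub_nonneg.2 (abs_sub_le_of_nonneg_of_le ht.1 ht.2 hz.1 hz.2)
    · have : (fun ω => (ω, t)) ⁻¹' W = ∅ := by
        ext ω
        simp only [W, mem_preimage, mem_ofPred_eq, mem_uncertainRegion1_threshold, ht, false_and,
          mem_empty_iff_false]
      rw [this, measure_empty, indicator_of_notMem ht]
  calc _ = ((Measure.pi fun _ => unif).prod volume) W := (Measure.prod_apply hW).symm
    _ = _ := by
      rw [Measure.prod_apply_symm hW, lintegral_congr hslice, lintegral_indicator measurableSet_Icc]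

theorem apply_eq_threshold_of_mem_Omega1 {f : ℝ → ℝ} (hf : f ∈ Omega1) {z : ℝ}
    (hz : z = sSup {x | x ∈ Icc (0 : ℝ) 1 ∧ f x = -1}) (hz0 : 0 < z) {x : ℝ}
    (hx : x ∈ Icc 0 1) (hxz : x ≠ z) : f x = threshold z x := by
  obtain ⟨hmono, hvals⟩ := hf
  have hne : {x | x ∈ Icc (0 : ℝ) 1 ∧ f x = -1}.Nonempty := by
    by_contra hempty
    rw [not_nonempty_iff_eq_empty.1 hempty, Real.sSup_empty] at hz
    exact hz0.ne' hz
  rcases hxz.lt_or_gt with hlt | hgt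
  · obtain ⟨y, ⟨hy, hfy⟩, hxy⟩ := exists_lt_of_lt_csSup hne (hz ▸ hlt)
    have hfx : f x ≤ -1 := hfy ▸ hmono hx hy hxy.le
    rw [threshold, if_pos hlt]
    rcases hvals x hx with h | h <;> linarith
  · have hfx : f x ≠ -1 := fun h =>
      hgt.not_ge (hz ▸ le_csSup ⟨1, fun y hy => hy.1.2⟩ ⟨hx, h⟩)
    rw [threshold, if_neg hgt.not_gt]
    exact (hvals x hx).resolve_left hfx

theorem ae_pi_unif_mem_Icc_ne {ι : Type*} [Fintype ι] (z : ℝ) :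
    ∀ᵐ ω ∂(Measure.pi fun _ : ι => unif), ∀ i, ω i ∈ Icc 0 1 ∧ ω i ≠ z := by
  have h : ∀ᵐ x ∂unif, x ∈ Icc 0 1 ∧ x ≠ z :=
    (ae_restrict_mem measurableSet_Icc).and (Measure.ae_ne _ z)
  exact ae_all_iff.2 fun i =>
    (Measure.tendsto_eval_ae_ae (μ := fun _ => unif) (i := i)).eventually h

/-- For `n` i.i.d. uniform points on `[0,1]` and monotone `f` whose transition point
`z = sup {x ∈ [0,1] : f x = -1}` lies in `(0,1)`, the expected uncertain volume equals
`(2 - (1-z)^(n+1) - z^(n+1))/(n+1)`. -/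
theorem monte_carlo_expected_uncertain_volume_of_threshold (n : ℕ)
    (f : ℝ → ℝ) (hf : f ∈ Omega1) (z : ℝ)
    (hz : z = sSup {x | x ∈ Icc (0 : ℝ) 1 ∧ f x = -1}) (hz' : z ∈ Ioo (0 : ℝ) 1) :
    (∫⁻ ω : Fin n → ℝ, volume (uncertainRegion1 (Set.range ω) f)
        ∂(Measure.pi fun _ => unif))
      = ENNReal.ofReal ((2 - (1 - z) ^ (n + 1) - z ^ (n + 1)) / (n + 1)) := by
  have hf_ae : ∀ᵐ ω ∂(Measure.pi fun _ : Fin n => unif), EqOn f (threshold z) (range ω) := by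
    filter_upwards [ae_pi_unif_mem_Icc_ne z] with ω hω
    rintro _ ⟨i, rfl⟩
    exact apply_eq_threshold_of_mem_Omega1 hf hz hz'.1 (hω i).1 (hω i).2
  calc _ = ∫⁻ ω : Fin n → ℝ, volume (uncertainRegion1 (range ω) (threshold z))
        ∂(Measure.pi fun _ => unif) :=
        lintegral_congr_ae (hf_ae.mono fun ω h => by rw [uncertainRegion1_congr h])
    _ = _ := by
      rw [lintegral_volume_uncertainRegion1_threshold (Ioo_subset_Icc_self hz'),
        Fintype.card_fin, lintegral_ofReal_one_sub_abs_sub_pow n (Ioo_subset_Icc_self hz')]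
end

section
/- Let p ≥ 2 be an integer, let f_1 ∈ Ω be the monotone function defined by f_1(x) = −1 if Σ_{k=1}^p x_k ≤ 1 and f_1(x) = 1 otherwise, let D ⊆ [0,1]^p be a finite design, and let v > 0 satisfy V(U(D, f_1)) ≤ v and v ≤ 1/(8·p!). Then card{ x ∈ D : 1 − 2·(p−1)!·v < Σ_{k=1}^p x_k ≤ 1 } ≥ p · 2^{−(p+1)} · ((p−1)!)^{−(p−1)} · v^{−(p−1)}. -/
/-!
Put `δ = 2 (p-1)! v` and `t = 1 - δ`. A point `y ≥ 0` with `t < ∑ y ≤ 1` that is not uncertain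
lies below a design point `x` with `f₁ x = -1`, and then `t < ∑ x ≤ 1`; so `y` lies in the
simplex `x - {z ≥ 0, ∑ z ≤ δ}` of volume `δ^p / p!`. The slab `t < ∑ y ≤ 1` has volume
`(1 - t^p) / p! ≥ 3v/2`, at most `v` of it is uncertain, so these simplices cover volume `v/2`,
which takes at least `p! v / (2 δ^p)` of them.
-/

open MeasureTheory Set

open scoped Nat

def cornerSimplex (n : ℕ) (s : ℝ) : Set (Fin n → ℝ) :=
  {y | 0 ≤ y ∧ ∑ i, y i ≤ s}

theorem measurableSet_cornerSimplex (n : ℕ) (s : ℝ) : MeasurableSet (cornerSimplex n s) :=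
  measurableSet_le measurable_const measurable_id |>.inter <|
    measurableSet_le (f := fun y : Fin n → ℝ ↦ ∑ i, y i) (by fun_prop) measurable_const

theorem volume_cornerSimplex_succ (n : ℕ) (s : ℝ) :
    volume (cornerSimplex (n + 1) s) = ∫⁻ a in Icc 0 s, volume (cornerSimplex n (s - a)) := by
  let T : Set (ℝ × (Fin n → ℝ)) := {q | q.1 ∈ Icc 0 s ∧ q.2 ∈ cornerSimplex n (s - q.1)}
  have hT : MeasurableSet T := by
    refine (measurableSet_Icc.preimage measurable_fst).inter ?_
    exact (measurableSet_le measurable_const measurable_snd).inter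
      (measurableSet_le (f := fun q : ℝ × (Fin n → ℝ) ↦ ∑ i, q.2 i) (by fun_prop) (by fun_prop))
  have hpre : cornerSimplex (n + 1) s = MeasurableEquiv.piFinSuccAbove (fun _ ↦ ℝ) 0 ⁻¹' T := by
    ext y
    simp only [cornerSimplex, mem_ofPred_eq, mem_preimage, MeasurableEquiv.piFinSuccAbove_apply,
      T, mem_Icc, Fin.sum_univ_succ, Pi.le_def, Fin.forall_fin_succ, Pi.zero_apply]
    change _ ↔ (0 ≤ y 0 ∧ y 0 ≤ s) ∧ (∀ i : Fin n, 0 ≤ y i.succ) ∧ ∑ i : Fin n, y i.succ ≤ s - y 0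
    constructor
    · rintro ⟨⟨h0, hsucc⟩, hle⟩
      have := Finset.sum_nonneg fun i (_ : i ∈ Finset.univ) ↦ hsucc i
      exact ⟨⟨h0, by linarith⟩, hsucc, by linarith⟩
    · rintro ⟨⟨h0, -⟩, hsucc, hle⟩
      exact ⟨⟨h0, hsucc⟩, by linarith⟩
  have hfiber (a : ℝ) : volume (Prod.mk a ⁻¹' T) =
      (Icc 0 s).indicator (fun a ↦ volume (cornerSimplex n (s - a))) a := by
    by_cases ha : a ∈ Icc 0 s
    · simp [T, ha, ha.1, ha.2]
    · rw [mem_Icc] at ha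
      simp [T, ha]
  rw [hpre, volume_pi, (measurePreserving_piFinSuccAbove (fun _ ↦ volume) 0).measure_preimage
    hT.nullMeasurableSet, Measure.prod_apply hT]
  simp only [← volume_pi, hfiber, lintegral_indicator measurableSet_Icc]

theorem volume_cornerSimplex (n : ℕ) {s : ℝ} (hs : 0 ≤ s) :
    volume (cornerSimplex n s) = ENNReal.ofReal (s ^ n / n !) := by
  induction n generalizing s with
  | zero => simp [cornerSimplex, hs, volume_pi, Measure.pi_empty_univ]
  | succ n ih =>
    have hint : ∫ a in Icc 0 s, (s - a) ^ n / n ! = s ^ (n + 1) / (n + 1)! := by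
      rw [integral_Icc_eq_integral_Ioc, ← intervalIntegral.integral_of_le hs,
        intervalIntegral.integral_div, intervalIntegral.integral_comp_sub_left (· ^ n) s]
      simp [integral_pow, Nat.factorial_succ]
      field_simp
    rw [volume_cornerSimplex_succ, setLIntegral_congr_fun measurableSet_Icc
      fun a ha ↦ ih (sub_nonneg.2 ha.2), ← hint, ofReal_integral_eq_lintegral_ofReal]
    · exact (by fun_prop : Continuous fun a : ℝ ↦ (s - a) ^ n / n !).integrableOn_Icc
    · filter_upwards [ae_restrict_mem measurableSet_Icc] with a ha
      have : 0 ≤ s - a := sub_nonneg.2 ha.2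
      positivity

theorem cornerSimplex_mono (n : ℕ) {t s : ℝ} (hts : t ≤ s) :
    cornerSimplex n t ⊆ cornerSimplex n s :=
  fun _ hy ↦ ⟨hy.1, hy.2.trans hts⟩

theorem volume_cornerSimplex_diff (n : ℕ) {t s : ℝ} (ht : 0 ≤ t) (hts : t ≤ s) :
    volume (cornerSimplex n s \ cornerSimplex n t) = ENNReal.ofReal ((s ^ n - t ^ n) / n !) := by
  rw [measure_sdiff (cornerSimplex_mono n hts) (measurableSet_cornerSimplex n t).nullMeasurableSet
      (by simp [volume_cornerSimplex n ht]), volume_cornerSimplex n (ht.trans hts),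
    volume_cornerSimplex n ht, ← ENNReal.ofReal_sub _ (by positivity), sub_div]

theorem volume_setOf_le_and_lt_sum_le {n : ℕ} {x : Fin n → ℝ} {t s : ℝ} (hs : 0 ≤ s)
    (hx : ∑ k, x k ≤ t + s) :
    volume {y | y ≤ x ∧ t < ∑ k, y k} ≤ ENNReal.ofReal (s ^ n / n !) := by
  have hsub : {y | y ≤ x ∧ t < ∑ k, y k} ⊆ (x - ·) ⁻¹' cornerSimplex n s := by
    rintro y ⟨hyx, hty⟩
    refine ⟨sub_nonneg.2 hyx, ?_⟩
    simp only [Pi.sub_apply, Finset.sum_sub_distrib]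
    linarith
  calc volume {y | y ≤ x ∧ t < ∑ k, y k}
      ≤ volume ((x - ·) ⁻¹' cornerSimplex n s) := measure_mono hsub
    _ = ENNReal.ofReal (s ^ n / n !) := by
      rw [(Measure.measurePreserving_sub_left volume x).measure_preimage
        (measurableSet_cornerSimplex n s).nullMeasurableSet, volume_cornerSimplex n hs]

theorem exists_of_notMem_uncertainRegion {p : ℕ} {D : Set (Fin p → ℝ)} {f : (Fin p → ℝ) → ℝ}
    {y : Fin p → ℝ} (hy : y ∈ Icc 0 1) (hU : y ∉ uncertainRegion p D f) :
    ∃ x ∈ D, f x = -1 ∧ y ≤ x ∨ f x = 1 ∧ x ≤ y := by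
  simp only [uncertainRegion, mem_sdiff, hy, true_and, not_not, mem_union, mem_iUnion₂,
    mem_sep_iff, exists_prop] at hU
  rcases hU with ⟨x, ⟨hxD, hfx⟩, hyx⟩ | ⟨x, ⟨hxD, hfx⟩, hxy⟩
  · exact ⟨x, hxD, .inl ⟨hfx, hyx.2⟩⟩
  · exact ⟨x, hxD, .inr ⟨hfx, hxy.1⟩⟩

/-- The function `f₁` of the paper. -/
noncomputable def diagonalLabel (p : ℕ) (x : Fin p → ℝ) : ℝ :=
  if ∑ k, x k ≤ 1 then -1 else 1

noncomputable def diagonalSlab {p : ℕ} (D : Finset (Fin p → ℝ)) (t : ℝ) : Finset (Fin p → ℝ) :=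
  {x ∈ D | t < ∑ k, x k ∧ ∑ k, x k ≤ 1}

theorem cornerSimplex_diff_subset {p : ℕ} (D : Finset (Fin p → ℝ)) (t : ℝ) :
    cornerSimplex p 1 \ cornerSimplex p t ⊆
      uncertainRegion p D (diagonalLabel p) ∪
        ⋃ x ∈ diagonalSlab D t, {y | y ≤ x ∧ t < ∑ k, y k} := by
  rintro y ⟨⟨hy0, hy1⟩, hyt⟩
  replace hyt : t < ∑ k, y k := lt_of_not_ge fun h ↦ hyt ⟨hy0, h⟩
  have hy : y ∈ Icc 0 1 := ⟨hy0, fun i ↦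
    (Finset.single_le_sum (fun k _ ↦ hy0 k) (Finset.mem_univ i)).trans hy1⟩
  by_cases hU : y ∈ uncertainRegion p D (diagonalLabel p)
  · exact .inl hU
  refine .inr ?_
  obtain ⟨x, hxD, ⟨hfx, hyx⟩ | ⟨hfx, hxy⟩⟩ := exists_of_notMem_uncertainRegion hy hU
  · have hx1 : ∑ k, x k ≤ 1 := by
      by_contra h
      norm_num [diagonalLabel, h] at hfx
    have hsum : ∑ k, y k ≤ ∑ k, x k := Finset.sum_le_sum fun k _ ↦ hyx k
    exact mem_iUnion₂.2 ⟨x, Finset.mem_filter.2 ⟨hxD, hyt.trans_le hsum, hx1⟩, hyx, hyt⟩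
  · have hsum : ∑ k, x k ≤ ∑ k, y k := Finset.sum_le_sum fun k _ ↦ hxy k
    norm_num [diagonalLabel, hsum.trans hy1] at hfx

open Finset in
theorem one_sub_pow_le_of_volume_uncertainRegion_le {p : ℕ} {D : Finset (Fin p → ℝ)} {t v : ℝ}
    (hv : 0 ≤ v) (ht0 : 0 ≤ t) (ht1 : t ≤ 1)
    (hvol : volume (uncertainRegion p D (diagonalLabel p)) ≤ ENNReal.ofReal v) :
    1 - t ^ p ≤ p ! * v + #(diagonalSlab D t) * (1 - t) ^ p := by
  have hcap : 0 ≤ (1 - t) ^ p / p ! := by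
    have := sub_nonneg.2 ht1
    positivity
  have hslab := volume_cornerSimplex_diff p ht0 ht1
  rw [one_pow] at hslab
  have hvol_le : ENNReal.ofReal ((1 - t ^ p) / p !)
      ≤ ENNReal.ofReal (v + #(diagonalSlab D t) * ((1 - t) ^ p / p !)) :=
    calc ENNReal.ofReal ((1 - t ^ p) / p !)
        = volume (cornerSimplex p 1 \ cornerSimplex p t) := hslab.symm
      _ ≤ volume (uncertainRegion p D (diagonalLabel p) ∪
            ⋃ x ∈ diagonalSlab D t, {y | y ≤ x ∧ t < ∑ k, y k}) :=
          measure_mono (cornerSimplex_diff_subset D t)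
      _ ≤ ENNReal.ofReal v + ∑ _x ∈ diagonalSlab D t, ENNReal.ofReal ((1 - t) ^ p / p !) :=
          (measure_union_le _ _).trans <| add_le_add hvol <|
            (measure_biUnion_finset_le _ _).trans <| sum_le_sum fun x hx ↦
              volume_setOf_le_and_lt_sum_le (sub_nonneg.2 ht1)
                (by linarith [(mem_filter.1 hx).2.2])
      _ = ENNReal.ofReal (v + #(diagonalSlab D t) * ((1 - t) ^ p / p !)) := by
          rw [sum_const, nsmul_eq_mul, ENNReal.ofReal_add hv (by positivity),
            ENNReal.ofReal_mul (by positivity), ENNReal.ofReal_natCast]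
  have := (ENNReal.ofReal_le_ofReal_iff (by positivity)).1 hvol_le
  rw [div_le_iff₀ (by positivity)] at this
  refine this.trans_eq ?_
  field_simp

theorem mul_mul_one_sub_le_one_sub_one_sub_pow {δ : ℝ} (h0 : 0 ≤ δ) (h1 : δ ≤ 1) (n : ℕ) :
    n * δ * (1 - (n - 1) * δ) ≤ 1 - (1 - δ) ^ n := by
  induction n with
  | zero => simp
  | succ n ih =>
    have hn : (0 : ℝ) ≤ n * (n - 1) := by
      rcases n with _ | n
      · simp
      · push_cast
        nlinarith
    push_cast
    rw [pow_succ]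
    nlinarith [mul_le_mul_of_nonneg_right ih (sub_nonneg.2 h1), mul_nonneg h0 h0,
      mul_nonneg hn (pow_nonneg h0 3)]

theorem mul_zpow_neg_eq_div (n : ℕ) {g v : ℝ} (hg : g ≠ 0) (hv : v ≠ 0) :
    (n : ℝ) * 2 ^ (-((n : ℤ) + 1)) * g ^ (-((n : ℤ) - 1)) * v ^ (-((n : ℤ) - 1)) =
      n * g * v / (2 * (2 * g * v) ^ n) := by
  rw [neg_sub, zpow_sub₀ hg, zpow_sub₀ hv, zpow_neg, ← Nat.cast_add_one]
  simp only [zpow_one, zpow_natCast]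
  field_simp
  ring

theorem design_diag_slab_card_lower_bound_general (p : ℕ) (hp : 2 ≤ p)
    (D : Finset (Fin p → ℝ))
    (v : ℝ) (hv : 0 < v) (hv' : v ≤ 1 / (8 * (p.factorial : ℝ)))
    (hvol : volume (uncertainRegion p ↑D
        (fun x => if (∑ k, x k) ≤ 1 then (-1 : ℝ) else 1)) ≤ ENNReal.ofReal v) :
    (p : ℝ) * (2 : ℝ) ^ (-((p : ℤ) + 1)) * (((p - 1).factorial : ℝ)) ^ (-((p : ℤ) - 1)) *
        v ^ (-((p : ℤ) - 1))
      ≤ (({x ∈ (D : Set (Fin p → ℝ)) |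
            1 - 2 * ((p - 1).factorial : ℝ) * v < ∑ k, x k ∧
              ∑ k, x k ≤ 1}).ncard : ℝ) := by
  set G : ℝ := ((p - 1)! : ℝ)
  set δ := 2 * G * v
  have hG : 0 < G := by positivity
  have hδ : 0 < δ := by positivity
  have hfact : (p ! : ℝ) = p * G := by
    rw [← Nat.mul_factorial_pred (by omega : p ≠ 0)]
    push_cast
    rfl
  have hp1 : (1 : ℝ) ≤ p := by exact_mod_cast (by omega : 1 ≤ p)
  have hpδ : p * δ ≤ 1 / 4 := by
    rw [le_div_iff₀ (by positivity), hfact] at hv'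
    linarith
  have hslab := one_sub_pow_le_of_volume_uncertainRegion_le (t := 1 - δ) hv.le (by nlinarith)
    (by linarith) hvol
  have hbern := mul_mul_one_sub_le_one_sub_one_sub_pow hδ.le (by nlinarith) p
  rw [sub_sub_cancel, hfact] at hslab
  have hgain : 3 / 2 * (p * G * v) ≤ 1 - (1 - δ) ^ p := by
    have hδ' : (p - 1) * δ ≤ 1 / 4 := by nlinarith
    nlinarith [mul_le_mul_of_nonneg_left hδ' (by positivity : 0 ≤ p * δ)]
  have hcount : p * G * v / (2 * δ ^ p) ≤ (diagonalSlab D (1 - δ)).card := by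
    rw [div_le_iff₀ (by positivity)]
    linarith
  rw [mul_zpow_neg_eq_div p hG.ne' hv.ne']
  convert hcount using 2
  rw [← ncard_coe_finset, diagonalSlab, Finset.coe_filter]
  rfl

/-- Counting lemma for adaptive designs: against the monotone function `f₁` which is
`-1` iff `Σ x_k ≤ 1`, a design with uncertain volume at most `v ≤ 1/(8 p!)` must place
at least `p 2^(-(p+1)) ((p-1)!)^(-(p-1)) v^(-(p-1))` points in the slab
`{1 - 2(p-1)!v < Σ x_k ≤ 1}`. -/
theorem design_diag_slab_card_lower_bound (p : ℕ) (hp : 2 ≤ p)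
    (D : Finset (Fin p → ℝ)) (hD : ↑D ⊆ Icc (0 : Fin p → ℝ) 1)
    (v : ℝ) (hv : 0 < v) (hv' : v ≤ 1 / (8 * (p.factorial : ℝ)))
    (hvol : volume (uncertainRegion p ↑D
        (fun x => if (∑ k, x k) ≤ 1 then (-1 : ℝ) else 1)) ≤ ENNReal.ofReal v) :
    (p : ℝ) * (2 : ℝ) ^ (-((p : ℤ) + 1)) * (((p - 1).factorial : ℝ)) ^ (-((p : ℤ) - 1)) *
        v ^ (-((p : ℤ) - 1))
      ≤ (({x ∈ (D : Set (Fin p → ℝ)) |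
            1 - 2 * ((p - 1).factorial : ℝ) * v < ∑ k, x k ∧
              ∑ k, x k ≤ 1}).ncard : ℝ) :=
  design_diag_slab_card_lower_bound_general p hp D v hv hv' hvol
end
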